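/- Let A ⊆ ℝ^n be a finite s-distance set. Then every standard monomial of the vanishing ideal I(A) with respect to the deglex term order has degree at most s. -/

import Mathlib

noncomputable section

open MvPolynomial

/-- The set of nonzero distances determined by a set `A` in Euclidean space. -/
def distSet {n : ℕ} (A : Set (EuclideanSpace ℝ (Fin n))) : Set ℝ :=
  {d | ∃ p ∈ A, ∃ q ∈ A, p ≠ q ∧ dist p q = d}

/-- The strict degree-lexicographic order on exponent vectors: compare first by
total degree, then lexicographically. -/
def degLexLT {n : ℕ} (u v : Fin n →₀ ℕ) : Prop :=
  (∑ i, u i) < (∑ i, v i) ∨ ((∑ i, u i) = (∑ i, v i) ∧ toLex u < toLex v)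

/-- `m` is the leading monomial of `f` with respect to the strict order `lt`. -/
def IsLeadingMonomial {K : Type*} [CommSemiring K] {n : ℕ}
    (lt : (Fin n →₀ ℕ) → (Fin n →₀ ℕ) → Prop)
    (f : MvPolynomial (Fin n) K) (m : Fin n →₀ ℕ) : Prop :=
  m ∈ f.support ∧ ∀ m' ∈ f.support, m' ≠ m → lt m' m

/-! Polynomials of degree at most `s` interpolate every function on `A`. Granting this, if
`|m| > s` then `x^m` minus a degree-`≤ s` interpolant of it vanishes on `A` and has deglex leading
monomial `m`, so `m` is not standard.

Interpolation is proved by duality: let weights `w` on `A` annihilate every polynomial of degree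
`≤ s`. Each monomial of a polynomial `F(x, y)` of degree `≤ 2 s` in `2 n` variables is a product
of a monomial in `x` and one in `y`, one of them of degree `≤ s`, so `∑ w a * w b * F(a, b) = 0`.
For `F(x, y) = ∏ d, (|x - y|² - d²)`, the product over the distances `d` of `A`, this sum is
`∑ w a ^ 2` times the nonzero constant `F(a, a)`, hence `w = 0`. -/

open Finset

namespace MvPolynomial

variable {R σ ι : Type*}

theorem totalDegree_X_le [CommSemiring R] (a : σ) : (X a : MvPolynomial σ R).totalDegree ≤ 1 :=
  (totalDegree_monomial_le _ _).trans_eq (Finsupp.sum_single_index rfl)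

variable [CommSemiring R] [Fintype σ]

theorem totalDegree_prod_X_pow_le (e : σ → ℕ) :
    (∏ k, X k ^ e k : MvPolynomial σ R).totalDegree ≤ ∑ k, e k :=
  (totalDegree_finsetProd _ _).trans <| sum_le_sum fun k _ => by
    rw [X_pow_eq_monomial]
    exact (totalDegree_monomial_le _ _).trans_eq (Finsupp.sum_single_index rfl)

theorem eval_sumElim_monomial (m : σ ⊕ σ →₀ ℕ) (c : R) (x y : σ → R) :
    eval (Sum.elim x y) (monomial m c) =
      c * (eval x (∏ k, X k ^ m (.inl k)) * eval y (∏ k, X k ^ m (.inr k))) := by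
  rw [eval_monomial, Finsupp.prod_fintype _ _ (by simp), Fintype.prod_sum_type]
  simp

theorem sum_sum_mul_eval_sumElim_eq_zero [Fintype ι] {p : ι → σ → R} {w : ι → R} {s : ℕ}
    (hw : ∀ f : MvPolynomial σ R, f.totalDegree ≤ s → ∑ i, w i * eval (p i) f = 0)
    {F : MvPolynomial (σ ⊕ σ) R} (hF : F.totalDegree ≤ 2 * s) :
    ∑ i, ∑ j, w i * w j * eval (Sum.elim (p i) (p j)) F = 0 := by
  have hmonomial : ∀ m ∈ F.support,
      ∑ i, ∑ j, w i * w j * eval (Sum.elim (p i) (p j)) (monomial m (coeff m F)) = 0 := by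
    intro m hm
    set P : MvPolynomial σ R := ∏ k, X k ^ m (.inl k)
    set Q : MvPolynomial σ R := ∏ k, X k ^ m (.inr k)
    have hsplit : P.totalDegree ≤ s ∨ Q.totalDegree ≤ s := by
      have hm : ∑ k, m (.inl k) + ∑ k, m (.inr k) ≤ 2 * s := by
        rw [← Fintype.sum_sum_type, ← Finsupp.degree_eq_sum]
        exact (le_totalDegree hm).trans hF
      have hP : P.totalDegree ≤ ∑ k, m (.inl k) := totalDegree_prod_X_pow_le _
      have hQ : Q.totalDegree ≤ ∑ k, m (.inr k) := totalDegree_prod_X_pow_le _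
      omega
    calc ∑ i, ∑ j, w i * w j * eval (Sum.elim (p i) (p j)) (monomial m (coeff m F))
        = coeff m F * ((∑ i, w i * eval (p i) P) * ∑ j, w j * eval (p j) Q) := by
          rw [sum_mul_sum, mul_sum]
          refine sum_congr rfl fun i _ => ?_
          rw [mul_sum]
          refine sum_congr rfl fun j _ => ?_
          rw [eval_sumElim_monomial]
          ring
      _ = 0 := by rcases hsplit with h | h <;> simp [hw _ h]
  calc ∑ i, ∑ j, w i * w j * eval (Sum.elim (p i) (p j)) F
      = ∑ m ∈ F.support, ∑ i, ∑ j,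
          w i * w j * eval (Sum.elim (p i) (p j)) (monomial m (coeff m F)) := by
        conv_lhs => rw [F.as_sum]
        simp only [map_sum, mul_sum]
        exact (sum_congr rfl fun _ _ => sum_comm).trans sum_comm
    _ = 0 := sum_eq_zero hmonomial

end MvPolynomial

section SquaredDistance

variable (σ R : Type*) [Fintype σ] [CommRing R]

/-- The squared distance `∑ k, (x k - y k) ^ 2` in the variables `x = X ∘ Sum.inl` and
`y = X ∘ Sum.inr`. -/
def sqDistPoly : MvPolynomial (σ ⊕ σ) R :=
  ∑ k, (X (.inl k) - X (.inr k)) ^ 2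

variable {σ R}

theorem eval_sumElim_sqDistPoly (x y : σ → R) :
    eval (Sum.elim x y) (sqDistPoly σ R) = ∑ k, (x k - y k) ^ 2 := by
  simp [sqDistPoly]

theorem totalDegree_sqDistPoly_le : (sqDistPoly σ R).totalDegree ≤ 2 := by
  refine totalDegree_finsetSum_le fun k _ => (totalDegree_pow _ _).trans ?_
  have := (totalDegree_sub _ _).trans <|
    max_le (totalDegree_X_le (R := R) (Sum.inl k : σ ⊕ σ)) (totalDegree_X_le (Sum.inr k))
  omega

end SquaredDistance

section Interpolation

variable {σ ι : Type*} [Fintype σ] [Fintype ι] {p : ι → σ → ℝ} {E : Finset ℝ} {s : ℕ}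

theorem eq_zero_of_sum_mul_eval_eq_zero (hE : E.card ≤ s) (hE0 : 0 ∉ E)
    (hp : ∀ i j, i ≠ j → ∑ k, (p i k - p j k) ^ 2 ∈ E) {w : ι → ℝ}
    (hw : ∀ f : MvPolynomial σ ℝ, f.totalDegree ≤ s → ∑ i, w i * eval (p i) f = 0) :
    w = 0 := by
  set F : MvPolynomial (σ ⊕ σ) ℝ := ∏ e ∈ E, (sqDistPoly σ ℝ - C e)
  have hF : F.totalDegree ≤ 2 * s := calc
    F.totalDegree ≤ ∑ e ∈ E, (sqDistPoly σ ℝ - C e).totalDegree := totalDegree_finsetProd _ _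
    _ ≤ ∑ _e ∈ E, 2 := by
      gcongr with e
      exact (totalDegree_sub_C_le _ _).trans totalDegree_sqDistPoly_le
    _ ≤ 2 * s := by rw [sum_const, smul_eq_mul]; omega
  have hoff : ∀ i j, i ≠ j → eval (Sum.elim (p i) (p j)) F = 0 := fun i j hij => by
    rw [map_prod]
    exact prod_eq_zero (hp i j hij) (by simp [eval_sumElim_sqDistPoly])
  have hdiag : ∀ i, eval (Sum.elim (p i) (p i)) F = ∏ e ∈ E, -e := fun i => by
    simp [F, eval_sumElim_sqDistPoly]
  have hdiag_ne : ∏ e ∈ E, -e ≠ 0 :=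
    prod_ne_zero_iff.2 fun e he => neg_ne_zero.2 (ne_of_mem_of_not_mem he hE0)
  have hsq : ∑ i, w i ^ 2 * ∏ e ∈ E, -e = 0 := by
    rw [← sum_sum_mul_eval_sumElim_eq_zero hw hF]
    refine sum_congr rfl fun i _ => ?_
    rw [sum_eq_single i (fun j _ hji => by rw [hoff i j hji.symm, mul_zero]) (by simp), hdiag]
    ring
  rw [← sum_mul, mul_eq_zero, or_iff_left hdiag_ne,
    sum_eq_zero_iff_of_nonneg fun i _ => sq_nonneg (w i)] at hsq
  exact funext fun i => pow_eq_zero_iff two_ne_zero |>.1 (hsq i (mem_univ i))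

theorem exists_totalDegree_le_eval_eq (hE : E.card ≤ s) (hE0 : 0 ∉ E)
    (hp : ∀ i j, i ≠ j → ∑ k, (p i k - p j k) ^ 2 ∈ E) (v : ι → ℝ) :
    ∃ f : MvPolynomial σ ℝ, f.totalDegree ≤ s ∧ ∀ i, eval (p i) f = v i := by
  classical
  let ev : MvPolynomial σ ℝ →ₗ[ℝ] ι → ℝ := LinearMap.pi fun i => (aeval (p i)).toLinearMap
  have hev (f : MvPolynomial σ ℝ) (i : ι) : ev f i = eval (p i) f := by simp [ev]
  have htop : (restrictTotalDegree σ ℝ s).map ev = ⊤ := by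
    by_contra hne
    obtain ⟨φ, hφ, hφK⟩ := Submodule.exists_dual_map_eq_bot_of_lt_top (lt_top_iff_ne_top.2 hne)
      inferInstance
    set w : ι → ℝ := fun i => φ fun j => if i = j then 1 else 0
    have hφw (x : ι → ℝ) : φ x = ∑ i, w i * x i := by
      rw [LinearMap.pi_apply_eq_sum_univ]
      simp only [smul_eq_mul, mul_comm, w]
    have hw : w = 0 := eq_zero_of_sum_mul_eval_eq_zero hE hE0 hp fun f hf => by
      simp_rw [← hev, ← hφw]
      exact (Submodule.eq_bot_iff _).1 hφK _
        ⟨ev f, ⟨f, (mem_restrictTotalDegree _ _ _).2 hf, rfl⟩, rfl⟩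
    exact hφ (LinearMap.ext fun x => by simp [hφw, hw])
  obtain ⟨f, hf, hfv⟩ := Submodule.eq_top_iff'.1 htop v
  exact ⟨f, (mem_restrictTotalDegree _ _ _).1 hf, fun i => by rw [← hev, hfv]⟩

end Interpolation

theorem isLeadingMonomial_degLexLT_monomial_sub {K : Type*} [CommRing K] {n : ℕ}
    {m : Fin n →₀ ℕ} {c : K} (hc : c ≠ 0) {g : MvPolynomial (Fin n) K}
    (hg : g.totalDegree < m.degree) :
    IsLeadingMonomial degLexLT (monomial m c - g) m := by
  have hgm : coeff m g = 0 := coeff_eq_zero_of_totalDegree_lt hg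
  refine ⟨by simpa [hgm] using hc, fun m' hm' hne => Or.inl ?_⟩
  have hgm' : m' ∈ g.support := by
    simpa [coeff_monomial, Ne.symm hne] using hm'
  rw [← Finsupp.degree_eq_sum, ← Finsupp.degree_eq_sum]
  exact (le_totalDegree hgm').trans_lt hg

theorem distSet_finite {n : ℕ} (A : Finset (EuclideanSpace ℝ (Fin n))) :
    (distSet (A : Set (EuclideanSpace ℝ (Fin n)))).Finite :=
  ((A ×ˢ A).image fun q => dist q.1 q.2).finite_toSet.subset <| by
    rintro _ ⟨p, hp, q, hq, -, rfl⟩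
    exact mem_image.2 ⟨(p, q), mem_product.2 ⟨hp, hq⟩, rfl⟩

theorem exists_totalDegree_le_eval_eq_of_distSet {n s : ℕ}
    {A : Finset (EuclideanSpace ℝ (Fin n))}
    (hA : (distSet (A : Set (EuclideanSpace ℝ (Fin n)))).ncard ≤ s) (v : A → ℝ) :
    ∃ f : MvPolynomial (Fin n) ℝ, f.totalDegree ≤ s ∧
      ∀ a : A, eval (fun i => (a : EuclideanSpace ℝ (Fin n)) i) f = v a := by
  refine exists_totalDegree_le_eval_eq (E := (distSet_finite A).toFinset.image (· ^ 2)) ?_ ?_ ?_ v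
  · rw [Set.ncard_eq_toFinset_card _ (distSet_finite A)] at hA
    exact card_image_le.trans hA
  · simp only [mem_image, Set.Finite.mem_toFinset, not_exists, not_and]
    rintro _ ⟨p, -, q, -, hpq, rfl⟩
    exact (pow_pos (dist_pos.2 hpq) 2).ne'
  · intro a b hab
    refine mem_image.2 ⟨dist (a : EuclideanSpace ℝ (Fin n)) b, ?_, ?_⟩
    · exact (Set.Finite.mem_toFinset _).2 ⟨a, a.2, b, b.2, Subtype.coe_ne_coe.2 hab, rfl⟩
    · simp [EuclideanSpace.dist_sq_eq, Real.dist_eq, sq_abs]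

/-- For a finite `s`-distance set `A ⊆ ℝ^n`, every deglex standard monomial of the
vanishing ideal `I(A)` has degree at most `s`. -/
theorem standard_monomials_of_sdist_set {n s : ℕ}
    (A : Finset (EuclideanSpace ℝ (Fin n)))
    (hA : (distSet (A : Set (EuclideanSpace ℝ (Fin n)))).ncard ≤ s) :
    ∀ m : Fin n →₀ ℕ,
      (¬ ∃ f : MvPolynomial (Fin n) ℝ, f ≠ 0 ∧
          (∀ a ∈ A, eval (fun i => a i) f = 0) ∧ IsLeadingMonomial degLexLT f m) →
      (∑ i, m i) ≤ s := by
  intro m hm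
  by_contra! hlt
  obtain ⟨g, hg, hgA⟩ := exists_totalDegree_le_eval_eq_of_distSet hA
    fun a => eval (fun i => (a : EuclideanSpace ℝ (Fin n)) i) (monomial m 1)
  have hlead : IsLeadingMonomial degLexLT (monomial m 1 - g) m :=
    isLeadingMonomial_degLexLT_monomial_sub one_ne_zero
      (hg.trans_lt (by rwa [Finsupp.degree_eq_sum]))
  exact hm ⟨_, ne_zero_iff.2 ⟨m, mem_support_iff.1 hlead.1⟩,
    fun a ha => by rw [map_sub, hgA ⟨a, ha⟩, sub_self], hlead⟩
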